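/- Suppose x ∈ ℂ^N has DFT x̂ supported on {0,...,B-1} with B ≤ N/2 (i.e., x̂_k = 0 for B ≤ k ≤ N-1). Then for any μ = e^{iψ}, the signal x' whose DFT is x̂'_k = μ^k x̂_k has the same FROG trace as x. -/

import Mathlib

open Finset

/-- Discrete Fourier transform: `x̂_k = Σ_{n=0}^{N-1} x_n e^{-2πi k n / N}`. -/
noncomputable def dft (N : ℕ) [NeZero N] (x : ZMod N → ℂ) (k : ZMod N) : ℂ :=
  ∑ n : ZMod N, x n * Complex.exp (-(2 * Real.pi * Complex.I) * (k.val * n.val) / N)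

/-- FROG trace: `|ŷ_{k,m}|² = |Σ_{n=0}^{N-1} x_n x_{n+mL} e^{-2πi n k / N}|²`. -/
noncomputable def frogTrace (N L : ℕ) [NeZero N] (x : ZMod N → ℂ) (k : ZMod N) (m : ℕ) : ℝ :=
  (‖(∑ n : ZMod N, x n * x (n + (m * L : ℕ)) *
      Complex.exp (-(2 * Real.pi * Complex.I) * (n.val * k.val) / N))‖) ^ 2

namespace FrogAux

variable (N : ℕ) [NeZero N]

noncomputable def ζ : ℂ := Complex.exp (-(2 * Real.pi * Complex.I) / N)

lemma zeta_pow (j : ℕ) : ζ N ^ j = Complex.exp (-(2 * Real.pi * Complex.I) * j / N) := by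
  rw [ζ, ← Complex.exp_nat_mul]
  congr 1
  ring

lemma zeta_pow_N : ζ N ^ N = 1 := by
  have hN : (N : ℂ) ≠ 0 := Nat.cast_ne_zero.mpr (NeZero.ne N)
  rw [zeta_pow, mul_div_assoc, div_self hN, mul_one, Complex.exp_neg,
    Complex.exp_two_pi_mul_I, inv_one]

lemma zeta_ne_zero : ζ N ≠ 0 := Complex.exp_ne_zero _

lemma zeta_pow_mod (j : ℕ) : ζ N ^ j = ζ N ^ (j % N) := by
  conv_lhs => rw [← Nat.div_add_mod j N]
  rw [pow_add, pow_mul, zeta_pow_N, one_pow, one_mul]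

noncomputable def E (j : ZMod N) : ℂ := ζ N ^ j.val

lemma E_natCast (j : ℕ) : E N (j : ZMod N) = ζ N ^ j := by
  rw [E, ZMod.val_natCast, ← zeta_pow_mod]

lemma E_zero : E N 0 = 1 := by simp [E]

lemma E_add (a b : ZMod N) : E N (a + b) = E N a * E N b := by
  have h : a + b = ((a.val + b.val : ℕ) : ZMod N) := by
    push_cast
    simp [ZMod.natCast_val, ZMod.cast_id]
  rw [h, E_natCast, pow_add]; rfl

lemma E_neg (a : ZMod N) : E N (-a) = (E N a)⁻¹ := by
  refine eq_inv_of_mul_eq_one_left ?_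
  rw [← E_add]
  simp [E_zero]

lemma zeta_primitive : IsPrimitiveRoot (ζ N) N := by
  have h := Complex.isPrimitiveRoot_exp N (NeZero.ne N)
  have he : ζ N = (Complex.exp (2 * Real.pi * Complex.I / N))⁻¹ := by
    rw [ζ, ← Complex.exp_neg]
    congr 1
    ring
  rw [he]
  exact h.inv

lemma E_eq_one_iff (a : ZMod N) : E N a = 1 ↔ a = 0 := by
  rw [E]
  constructor
  · intro h
    have hd := ((zeta_primitive N).pow_eq_one_iff_dvd a.val).mp h
    have hlt := ZMod.val_lt a
    have h0 : a.val = 0 := Nat.eq_zero_of_dvd_of_lt hd hlt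
    exact (ZMod.val_eq_zero a).mp h0
  · rintro rfl
    simp

lemma sum_val_range {M : Type*} [AddCommMonoid M] (f : ℕ → M) :
    ∑ n : ZMod N, f n.val = ∑ i ∈ Finset.range N, f i := by
  obtain ⟨n, rfl⟩ := Nat.exists_eq_succ_of_ne_zero (NeZero.ne N)
  exact Fin.sum_univ_eq_sum_range (fun i => f i) (n + 1)

lemma E_mul_val (a b : ZMod N) : E N (a * b) = ζ N ^ (a.val * b.val) := by
  have h : a * b = ((a.val * b.val : ℕ) : ZMod N) := by
    push_cast
    simp [ZMod.natCast_val, ZMod.cast_id]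
  rw [h, E_natCast]

lemma sum_E (a : ZMod N) : ∑ n : ZMod N, E N (a * n) = if a = 0 then (N : ℂ) else 0 := by
  have h1 : ∀ n : ZMod N, E N (a * n) = (E N a) ^ n.val := by
    intro n
    rw [E_mul_val, E, ← pow_mul]
  simp only [h1]
  rw [sum_val_range N (fun i => E N a ^ i)]
  by_cases h : a = 0
  · subst h
    simp [E_zero]
  · rw [if_neg h, geom_sum_eq (fun h1 => h ((E_eq_one_iff N a).mp h1))]
    have hN1 : E N a ^ N = 1 := by
      rw [E, ← pow_mul, mul_comm, pow_mul, zeta_pow_N, one_pow]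
    rw [hN1, sub_self, zero_div]

lemma dft_eq (x : ZMod N → ℂ) (k : ZMod N) :
    dft N x k = ∑ n : ZMod N, x n * E N (k * n) := by
  unfold dft
  refine Finset.sum_congr rfl fun n _ => ?_
  congr 1
  rw [E_mul_val, zeta_pow]
  norm_cast

lemma conv (x : ZMod N → ℂ) (k c : ZMod N) :
    ∑ p : ZMod N, dft N x p * dft N x (k - p) * (E N ((k - p) * c))⁻¹
      = N * ∑ n : ZMod N, x n * x (n + c) * E N (k * n) := by
  have key : ∀ p n n' : ZMod N,
      E N (p * n) * E N ((k - p) * n') * (E N ((k - p) * c))⁻¹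
        = E N (k * (n' - c)) * E N ((n - n' + c) * p) := by
    intro p n n'
    rw [← E_neg, ← E_add, ← E_add, ← E_add]
    congr 1
    ring
  simp only [dft_eq]
  calc ∑ p : ZMod N, (∑ n : ZMod N, x n * E N (p * n)) *
          (∑ n' : ZMod N, x n' * E N ((k - p) * n')) * (E N ((k - p) * c))⁻¹
      = ∑ p : ZMod N, ∑ n : ZMod N, ∑ n' : ZMod N,
          x n * x n' * (E N (k * (n' - c)) * E N ((n - n' + c) * p)) := by
        refine Finset.sum_congr rfl fun p _ => ?_
        rw [Finset.sum_mul_sum, Finset.sum_mul]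
        refine Finset.sum_congr rfl fun n _ => ?_
        rw [Finset.sum_mul]
        refine Finset.sum_congr rfl fun n' _ => ?_
        rw [← key p n n']
        ring
    _ = ∑ n : ZMod N, ∑ n' : ZMod N, ∑ p : ZMod N,
          x n * x n' * (E N (k * (n' - c)) * E N ((n - n' + c) * p)) := by
        rw [Finset.sum_comm]
        exact Finset.sum_congr rfl fun n _ => Finset.sum_comm
    _ = ∑ n : ZMod N, ∑ n' : ZMod N,
          (if n' = n + c then x n * x n' * E N (k * (n' - c)) * N else 0) := by
        refine Finset.sum_congr rfl fun n _ => Finset.sum_congr rfl fun n' _ => ?_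
        rw [← Finset.mul_sum, ← Finset.mul_sum, sum_E]
        by_cases hc : n' = n + c
        · subst hc
          rw [if_pos (show n - (n + c) + c = 0 by ring), if_pos rfl]
          ring
        · rw [if_neg (fun h0 => hc (by linear_combination (n' - n - c) - h0)), if_neg hc]
          ring
    _ = ∑ n : ZMod N, x n * x (n + c) * E N (k * (n + c - c)) * N := by
        refine Finset.sum_congr rfl fun n _ => ?_
        rw [Finset.sum_ite_eq' Finset.univ (n + c)
          (fun n' => x n * x n' * E N (k * (n' - c)) * N), if_pos (Finset.mem_univ _)]
    _ = N * ∑ n : ZMod N, x n * x (n + c) * E N (k * n) := by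
        rw [Finset.mul_sum]
        refine Finset.sum_congr rfl fun n _ => ?_
        rw [add_sub_cancel_right]
        ring

lemma frog_eq (L : ℕ) (x : ZMod N → ℂ) (k : ZMod N) (m : ℕ) :
    frogTrace N L x k m =
      ‖∑ n : ZMod N, x n * x (n + ((m * L : ℕ) : ZMod N)) * E N (k * n)‖ ^ 2 := by
  unfold frogTrace
  congr 2
  refine Finset.sum_congr rfl fun n _ => ?_
  congr 1
  rw [E_mul_val, zeta_pow, mul_comm k.val n.val]
  norm_cast

end FrogAux

open FrogAux

theorem stmt4 (N L B : ℕ) [NeZero N] (hdvd : L ∣ N) (hB : B ≤ N / 2)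
    (x x' : ZMod N → ℂ)
    (hsupp : ∀ k : ZMod N, B ≤ k.val → dft N x k = 0)
    (ψ : ℝ)
    (hx' : ∀ k : ZMod N, dft N x' k = (Complex.exp (Complex.I * ψ)) ^ k.val * dft N x k) :
    ∀ (k : ZMod N) (m : ℕ), frogTrace N L x' k m = frogTrace N L x k m := by
  intro k m
  set μ := Complex.exp (Complex.I * ψ) with hμdef
  have hμ : ‖μ‖ = 1 := by
    rw [hμdef, Complex.norm_exp]
    simp
  set c : ZMod N := ((m * L : ℕ) : ZMod N) with hcdef
  have hBN : 2 * B ≤ N := by omega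
  have hterm : ∀ p : ZMod N,
      dft N x' p * dft N x' (k - p) * (E N ((k - p) * c))⁻¹
        = μ ^ k.val * (dft N x p * dft N x (k - p) * (E N ((k - p) * c))⁻¹) := by
    intro p
    rw [hx' p, hx' (k - p)]
    by_cases h1 : dft N x p = 0
    · simp [h1]
    by_cases h2 : dft N x (k - p) = 0
    · simp [h2]
    have hp : p.val < B := by
      by_contra h
      exact h1 (hsupp p (le_of_not_gt h))
    have hq : (k - p).val < B := by
      by_contra h
      exact h2 (hsupp (k - p) (le_of_not_gt h))
    have hsum : p.val + (k - p).val = k.val := by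
      have hmod : k.val = (p.val + (k - p).val) % N := by
        conv_lhs => rw [show k = p + (k - p) by ring]
        exact ZMod.val_add p (k - p)
      have hlt : p.val + (k - p).val < N := by omega
      rw [Nat.mod_eq_of_lt hlt] at hmod
      omega
    rw [← hsum, pow_add]
    ring
  have hN : (N : ℂ) ≠ 0 := Nat.cast_ne_zero.mpr (NeZero.ne N)
  have hS : ∑ n : ZMod N, x' n * x' (n + c) * E N (k * n)
      = μ ^ k.val * ∑ n : ZMod N, x n * x (n + c) * E N (k * n) := by
    apply mul_left_cancel₀ hN
    rw [← conv N x' k c]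
    calc ∑ p : ZMod N, dft N x' p * dft N x' (k - p) * (E N ((k - p) * c))⁻¹
        = ∑ p : ZMod N, μ ^ k.val *
            (dft N x p * dft N x (k - p) * (E N ((k - p) * c))⁻¹) :=
          Finset.sum_congr rfl fun p _ => hterm p
      _ = μ ^ k.val * ∑ p : ZMod N, dft N x p * dft N x (k - p) * (E N ((k - p) * c))⁻¹ :=
          (Finset.mul_sum _ _ _).symm
      _ = μ ^ k.val * ((N : ℂ) * ∑ n : ZMod N, x n * x (n + c) * E N (k * n)) := by
          rw [conv N x k c]
      _ = (N : ℂ) * (μ ^ k.val * ∑ n : ZMod N, x n * x (n + c) * E N (k * n)) := by ring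
  rw [frog_eq, frog_eq, ← hcdef, hS, norm_mul, norm_pow, hμ, one_pow, one_mul]
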